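/- arXiv:1503.00496 — 3 statements merged into one kernel-verified Lean document; each statement's English description precedes it below -/
import Mathlib

section
/- There exists a constant c depending only on N such that: if a sequence (γ_k) in 𝔖¹(𝓗^N) converges geometrically to γ ∈ 𝔖¹(𝓕^{≤N}(𝓗)) and ‖γ_k‖_{𝔖¹(𝓗^N)} < ε for all k, then ‖γ‖_{𝔖¹(𝓕^{≤N})} ≤ c ε. -/
/-!
The reduced density matrices determine the limit by binomial inversion,
`G_n = ∑_{m ≥ n} (-1)^(m-n) C(m,n) Tr_{n+1,…,m} γ^{(m)}`. Partial traces do not increase the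
trace norm, and the trace norm is lower semicontinuous for weak-* convergence (test against
rank-one operators), so `‖γ^{(m)}‖ ≤ C(N,m) ε` and `‖G_n‖ ≤ ∑_m C(m,n) C(N,m) ε`. Summing over
`n` gives `∑_m C(N,m) 2^m ε = 3^N ε`.
-/

open scoped InnerProductSpace
open Filter

noncomputable section

universe u

section Defs

variable {E : Type u} [NormedAddCommGroup E] [InnerProductSpace ℂ E] [CompleteSpace E]

/-- `A` has trace `c`. -/
def HasTr (A : E →L[ℂ] E) (c : ℂ) : Prop :=
  ∀ (ι : Type u) (e : HilbertBasis ι ℂ E), HasSum (fun i => ⟪e i, A (e i)⟫_ℂ) c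

/-- The trace norm of `A` is at most `C`. -/
def TraceNormLE (A : E →L[ℂ] E) (C : ℝ) : Prop :=
  ∀ (n : ℕ) (e f : Fin n → E), Orthonormal ℂ e → Orthonormal ℂ f →
    ∑ i, ‖(⟪e i, A (f i)⟫_ℂ)‖ ≤ C

/-- Weak-* convergence in the trace class. -/
def WeakStarTo (A : ℕ → (E →L[ℂ] E)) (L : E →L[ℂ] E) : Prop :=
  ∀ (T : E →L[ℂ] E), IsCompactOperator (⇑T) →
    ∀ (c : ℕ → ℂ) (cL : ℂ), (∀ k, HasTr (T.comp (A k)) (c k)) → HasTr (T.comp L) cL →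
      Tendsto c atTop (nhds cL)

end Defs

/-- The `n`-particle reduced density matrix of a block operator on `𝓕^{≤N}`. -/
def rdm {Hn : ℕ → Type u} [∀ n, NormedAddCommGroup (Hn n)]
    [∀ n, InnerProductSpace ℂ (Hn n)] [∀ n, CompleteSpace (Hn n)]
    (ptr : ∀ m n : ℕ, (Hn m →L[ℂ] Hn m) → (Hn n →L[ℂ] Hn n)) (N : ℕ)
    (G : ∀ n, Hn n →L[ℂ] Hn n) (n : ℕ) : Hn n →L[ℂ] Hn n :=
  ∑ m ∈ Finset.Icc n N, (m.choose n : ℂ) • ptr m n (G m)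


open Finset

theorem sum_Icc_neg_one_pow_mul_choose_mul_choose {n l : ℕ} (hnl : n ≤ l) :
    ∑ m ∈ Icc n l, (-1 : ℤ) ^ (m - n) * (m.choose n * l.choose m) = if l = n then 1 else 0 := by
  have hfactor : ∀ m ∈ Icc n l, (-1 : ℤ) ^ (m - n) * (m.choose n * l.choose m)
      = l.choose n * ((-1) ^ (m - n) * (l - n).choose (m - n)) := by
    intro m hm
    have h := Nat.choose_mul (n := l) (mem_Icc.1 hm).1
    rw [mul_comm (m.choose n : ℤ), ← Nat.cast_mul, h]
    push_cast
    ring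
  rw [sum_congr rfl hfactor, ← mul_sum, ← Ico_add_one_right_eq_Icc, sum_Ico_eq_sum_range]
  simp only [Nat.add_sub_cancel_left]
  rw [show l + 1 - n = l - n + 1 by omega, Int.alternating_sum_range_choose]
  rcases eq_or_lt_of_le hnl with rfl | hlt
  · simp
  · simp [Nat.sub_ne_zero_of_lt hlt, hlt.ne']

theorem sum_range_sum_Icc_choose_mul_choose (N : ℕ) :
    ∑ n ∈ range (N + 1), ∑ m ∈ Icc n N, m.choose n * N.choose m = 3 ^ N := by
  rw [sum_comm' (t' := range (N + 1)) (s' := fun m => range (m + 1)) (by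
    intro n m
    simp only [mem_range, mem_Icc]
    omega)]
  simp only [← sum_mul, Nat.sum_range_choose]
  rw [show 3 = 2 + 1 by rfl, add_pow]
  simp [mul_comm]

section TraceNorm

variable {E : Type u} [NormedAddCommGroup E] [InnerProductSpace ℂ E]

theorem TraceNormLE.sum_norm_inner_le {A : E →L[ℂ] E} {C : ℝ} (h : TraceNormLE A C)
    {ι : Type*} [Fintype ι] {e f : ι → E} (he : Orthonormal ℂ e) (hf : Orthonormal ℂ f) :
    ∑ i, ‖⟪e i, A (f i)⟫_ℂ‖ ≤ C := by
  let σ := (Fintype.equivFin ι).symm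
  rw [← Equiv.sum_comp σ]
  exact h _ (e ∘ σ) (f ∘ σ) (he.comp σ σ.injective) (hf.comp σ σ.injective)

theorem traceNormLE_zero : TraceNormLE (0 : E →L[ℂ] E) 0 := by
  intro _ _ _ _ _
  simp

theorem TraceNormLE.smul {A : E →L[ℂ] E} {C : ℝ} (h : TraceNormLE A C) (z : ℂ) :
    TraceNormLE (z • A) (‖z‖ * C) := by
  intro p e f he hf
  simp only [smul_apply, inner_smul_right, norm_mul, ← mul_sum]
  exact mul_le_mul_of_nonneg_left (h p e f he hf) (norm_nonneg z)

theorem traceNormLE_sum {ι : Type*} (s : Finset ι) {A : ι → E →L[ℂ] E} {C : ι → ℝ}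
    (h : ∀ m ∈ s, TraceNormLE (A m) (C m)) :
    TraceNormLE (∑ m ∈ s, A m) (∑ m ∈ s, C m) := by
  intro p e f he hf
  calc ∑ i, ‖⟪e i, (∑ m ∈ s, A m) (f i)⟫_ℂ‖
      ≤ ∑ i, ∑ m ∈ s, ‖⟪e i, A m (f i)⟫_ℂ‖ := by
        gcongr with i
        rw [_root_.sum_apply, inner_sum]
        exact norm_sum_le _ _
    _ = ∑ m ∈ s, ∑ i, ‖⟪e i, A m (f i)⟫_ℂ‖ := sum_comm
    _ ≤ ∑ m ∈ s, C m := sum_le_sum fun m hm => h m hm p e f he hf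

theorem isCompactOperator_rankOne (x y : E) :
    IsCompactOperator ((innerSL ℂ x).smulRight y) :=
  (isCompactOperator_of_locallyCompactSpace_rng ((1 : ℂ →L[ℂ] ℂ).smulRight y)).comp_clm
    (innerSL ℂ x)

variable [CompleteSpace E]

theorem hasTr_rankOne_comp (x y : E) (A : E →L[ℂ] E) :
    HasTr (((innerSL ℂ x).smulRight y).comp A) ⟪x, A y⟫_ℂ := by
  intro ι b
  have h := b.hasSum_inner_mul_inner (ContinuousLinearMap.adjoint A x) y
  simp only [ContinuousLinearMap.adjoint_inner_left] at h
  simpa only [ContinuousLinearMap.comp_apply, ContinuousLinearMap.smulRight_apply,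
    innerSL_apply_apply, inner_smul_right] using h

theorem WeakStarTo.tendsto_inner {A : ℕ → E →L[ℂ] E} {L : E →L[ℂ] E} (h : WeakStarTo A L)
    (x y : E) : Tendsto (fun k => ⟪x, A k y⟫_ℂ) atTop (nhds ⟪x, L y⟫_ℂ) :=
  h _ (isCompactOperator_rankOne x y) _ _ (fun _ => hasTr_rankOne_comp x y _)
    (hasTr_rankOne_comp x y _)

theorem WeakStarTo.traceNormLE {A : ℕ → E →L[ℂ] E} {L : E →L[ℂ] E} {C : ℝ}
    (h : WeakStarTo A L) (hA : ∀ k, TraceNormLE (A k) C) : TraceNormLE L C := by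
  intro p e f he hf
  refine le_of_tendsto (tendsto_finsetSum _ fun i _ => (h.tendsto_inner (e i) (f i)).norm) ?_
  exact Eventually.of_forall fun k => hA k p e f he hf

end TraceNorm

section PartialTrace

variable {H : Type u} [NormedAddCommGroup H] [InnerProductSpace ℂ H]
  {Hn : ℕ → Type u} [∀ n, NormedAddCommGroup (Hn n)] [∀ n, InnerProductSpace ℂ (Hn n)]
  {tp : ∀ n, Hn n → H → Hn (n + 1)}

theorem Orthonormal.tp_prod
    (htp : ∀ n (x y : Hn n) (f g : H), ⟪tp n x f, tp n y g⟫_ℂ = ⟪x, y⟫_ℂ * ⟪f, g⟫_ℂ)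
    {n : ℕ} {ι₁ ι₂ : Type*} {e : ι₁ → Hn n} {g : ι₂ → H}
    (he : Orthonormal ℂ e) (hg : Orthonormal ℂ g) :
    Orthonormal ℂ (fun q : ι₁ × ι₂ => tp n (e q.1) (g q.2)) := by
  classical
  rw [orthonormal_iff_ite] at he hg ⊢
  intro q r
  rw [htp, he, hg]
  by_cases h1 : q.1 = r.1 <;> by_cases h2 : q.2 = r.2 <;> simp [h1, h2, Prod.ext_iff]

variable [CompleteSpace H] {ptr : ∀ m n : ℕ, (Hn m →L[ℂ] Hn m) → (Hn n →L[ℂ] Hn n)}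

/-- The matrix elements of `ptr (n + 1) n G` between orthonormal families `e`, `f` are sums of
matrix elements of `G` between the orthonormal families `tp (e i) (b j)`, `tp (f i) (b j)`,
`b` a Hilbert basis. -/
theorem TraceNormLE.partialTrace_succ
    (htp : ∀ n (x y : Hn n) (f g : H), ⟪tp n x f, tp n y g⟫_ℂ = ⟪x, y⟫_ℂ * ⟪f, g⟫_ℂ)
    (hps : ∀ n (G : Hn (n + 1) →L[ℂ] Hn (n + 1)) (x y : Hn n)
      (ι : Type u) (e : HilbertBasis ι ℂ H),
      HasSum (fun i => ⟪tp n x (e i), G (tp n y (e i))⟫_ℂ) ⟪x, ptr (n + 1) n G y⟫_ℂ)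
    {n : ℕ} {G : Hn (n + 1) →L[ℂ] Hn (n + 1)} {C : ℝ} (hG : TraceNormLE G C) :
    TraceNormLE (ptr (n + 1) n G) C := by
  intro p e f he hf
  obtain ⟨w, b, -⟩ := exists_hilbertBasis ℂ H
  let F : Fin p → w → ℂ := fun i j => ⟪tp n (e i) (b j), G (tp n (f i) (b j))⟫_ℂ
  have hlim : Tendsto (fun J : Finset w => ∑ i, ‖∑ j ∈ J, F i j‖) atTop
      (nhds (∑ i, ‖⟪e i, ptr (n + 1) n G (f i)⟫_ℂ‖)) :=
    tendsto_finsetSum _ fun i _ => Tendsto.norm (hps n G (e i) (f i) w b)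
  refine le_of_tendsto hlim (Eventually.of_forall fun J => ?_)
  have hbJ : Orthonormal ℂ fun j : J => b j := b.orthonormal.comp _ Subtype.val_injective
  calc ∑ i, ‖∑ j ∈ J, F i j‖
      ≤ ∑ i, ∑ j : J, ‖F i j‖ := by
        gcongr with i
        rw [← sum_coe_sort J]
        exact norm_sum_le _ _
    _ = ∑ q : Fin p × J, ‖F q.1 q.2‖ :=
        (Fintype.sum_prod_type fun q : Fin p × J => ‖F q.1 q.2‖).symm
    _ ≤ C := hG.sum_norm_inner_le (he.tp_prod htp hbJ) (hf.tp_prod htp hbJ)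

theorem TraceNormLE.partialTrace
    (htp : ∀ n (x y : Hn n) (f g : H), ⟪tp n x f, tp n y g⟫_ℂ = ⟪x, y⟫_ℂ * ⟪f, g⟫_ℂ)
    (hrefl : ∀ n G, ptr n n G = G)
    (hps : ∀ n (G : Hn (n + 1) →L[ℂ] Hn (n + 1)) (x y : Hn n)
      (ι : Type u) (e : HilbertBasis ι ℂ H),
      HasSum (fun i => ⟪tp n x (e i), G (tp n y (e i))⟫_ℂ) ⟪x, ptr (n + 1) n G y⟫_ℂ)
    (hcomp : ∀ m n : ℕ, n ≤ m → ∀ (G : Hn (m + 1) →L[ℂ] Hn (m + 1)),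
      ptr (m + 1) n G = ptr m n (ptr (m + 1) m G))
    {m n : ℕ} (hnm : n ≤ m) {G : Hn m →L[ℂ] Hn m} {C : ℝ} (hG : TraceNormLE G C) :
    TraceNormLE (ptr m n G) C := by
  induction m, hnm using Nat.le_induction generalizing C with
  | base => rwa [hrefl]
  | succ m hnm ih =>
    rw [hcomp m n hnm]
    exact ih (hG.partialTrace_succ (ptr := ptr) htp hps)

end PartialTrace

section Inversion

variable {Hn : ℕ → Type u} [∀ n, NormedAddCommGroup (Hn n)] [∀ n, InnerProductSpace ℂ (Hn n)]
  {ptr : ∀ m n : ℕ, (Hn m →L[ℂ] Hn m) → (Hn n →L[ℂ] Hn n)}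

theorem partialTrace_trans (hrefl : ∀ n G, ptr n n G = G)
    (hcomp : ∀ m n : ℕ, n ≤ m → ∀ (G : Hn (m + 1) →L[ℂ] Hn (m + 1)),
      ptr (m + 1) n G = ptr m n (ptr (m + 1) m G))
    {k m n : ℕ} (hnm : n ≤ m) (hmk : m ≤ k) (G : Hn k →L[ℂ] Hn k) :
    ptr k n G = ptr m n (ptr k m G) := by
  induction k, hmk using Nat.le_induction with
  | base => rw [hrefl]
  | succ k hmk ih => rw [hcomp k n (hnm.trans hmk), ih, hcomp k m hmk]

variable [∀ n, CompleteSpace (Hn n)]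

theorem eq_sum_partialTrace_rdm (hlin : ∀ m n, IsLinearMap ℂ (ptr m n))
    (hrefl : ∀ n G, ptr n n G = G)
    (hcomp : ∀ m n : ℕ, n ≤ m → ∀ (G : Hn (m + 1) →L[ℂ] Hn (m + 1)),
      ptr (m + 1) n G = ptr m n (ptr (m + 1) m G))
    (G : ∀ n, Hn n →L[ℂ] Hn n) {N n : ℕ} (hn : n ≤ N) :
    G n = ∑ m ∈ Icc n N,
      ((-1 : ℂ) ^ (m - n) * m.choose n) • ptr m n (rdm ptr N G m) := by
  let P := fun m n => IsLinearMap.mk' (ptr m n) (hlin m n)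
  have hexpand : ∀ m ∈ Icc n N, ((-1 : ℂ) ^ (m - n) * m.choose n) • ptr m n (rdm ptr N G m)
      = ∑ l ∈ Icc m N, ((-1 : ℂ) ^ (m - n) * m.choose n * l.choose m) • ptr l n (G l) := by
    intro m hm
    change _ • P m n (rdm ptr N G m) = _
    rw [rdm, map_sum, smul_sum]
    refine sum_congr rfl fun l hl => ?_
    rw [map_smul, smul_smul,
      partialTrace_trans hrefl hcomp (mem_Icc.1 hm).1 (mem_Icc.1 hl).1]
    rfl
  have hcoeff : ∀ l ∈ Icc n N,
      ∑ m ∈ Icc n l, (-1 : ℂ) ^ (m - n) * m.choose n * l.choose m = if l = n then 1 else 0 := by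
    intro l hl
    have h := congrArg (Int.cast : ℤ → ℂ)
      (sum_Icc_neg_one_pow_mul_choose_mul_choose (mem_Icc.1 hl).1)
    push_cast at h
    simpa only [mul_assoc] using h
  rw [sum_congr rfl hexpand, sum_comm' (t' := Icc n N) (s' := fun l => Icc n l) (by
    intro m l
    simp only [mem_Icc]
    omega)]
  simp only [← sum_smul]
  rw [sum_congr rfl fun l hl => by rw [hcoeff l hl]]
  simp [ite_smul, hn, hrefl]

theorem traceNormLE_of_rdm
    {H : Type u} [NormedAddCommGroup H] [InnerProductSpace ℂ H] [CompleteSpace H]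
    {tp : ∀ n, Hn n → H → Hn (n + 1)}
    (htp : ∀ n (x y : Hn n) (f g : H), ⟪tp n x f, tp n y g⟫_ℂ = ⟪x, y⟫_ℂ * ⟪f, g⟫_ℂ)
    (hlin : ∀ m n, IsLinearMap ℂ (ptr m n))
    (hrefl : ∀ n G, ptr n n G = G)
    (hps : ∀ n (G : Hn (n + 1) →L[ℂ] Hn (n + 1)) (x y : Hn n)
      (ι : Type u) (e : HilbertBasis ι ℂ H),
      HasSum (fun i => ⟪tp n x (e i), G (tp n y (e i))⟫_ℂ) ⟪x, ptr (n + 1) n G y⟫_ℂ)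
    (hcomp : ∀ m n : ℕ, n ≤ m → ∀ (G : Hn (m + 1) →L[ℂ] Hn (m + 1)),
      ptr (m + 1) n G = ptr m n (ptr (m + 1) m G))
    (G : ∀ n, Hn n →L[ℂ] Hn n) {N n : ℕ} (hn : n ≤ N) {B : ℕ → ℝ}
    (hB : ∀ m ∈ Icc n N, TraceNormLE (rdm ptr N G m) (B m)) :
    TraceNormLE (G n) (∑ m ∈ Icc n N, m.choose n * B m) := by
  rw [eq_sum_partialTrace_rdm hlin hrefl hcomp G hn]
  refine traceNormLE_sum _ fun m hm => ?_
  have h := ((hB m hm).partialTrace htp hrefl hps hcomp (mem_Icc.1 hm).1).smul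
    ((-1 : ℂ) ^ (m - n) * m.choose n)
  simpa using h

end Inversion
/-- **Trace-norm bound for geometric limits.** There is a constant `c` depending only on
`N` such that if a sequence `γ_k ∈ 𝔖¹(𝓗^N)` converges geometrically to
`γ = G_0 ⊕ ⋯ ⊕ G_N ∈ 𝔖¹(𝓕^{≤N}(𝓗))` and `‖γ_k‖_{𝔖¹} ≤ ε` for all `k`, then
`‖γ‖_{𝔖¹(𝓕^{≤N})} = ∑_n ‖G_n‖_{𝔖¹} ≤ c ε`. -/
theorem traceNorm_of_geometric_limit (N : ℕ) :
    ∃ c : ℝ, 0 < c ∧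
    ∀ (H : Type u), ∀ (_ : NormedAddCommGroup H) (_ : InnerProductSpace ℂ H)
      (_ : CompleteSpace H),
    ∀ (Hn : ℕ → Type u), ∀ (_ : ∀ n, NormedAddCommGroup (Hn n))
      (_ : ∀ n, InnerProductSpace ℂ (Hn n)) (_ : ∀ n, CompleteSpace (Hn n)),
    ∀ (tp : ∀ n, Hn n → H → Hn (n + 1)),
      (∀ n (x y : Hn n) (f g : H), ⟪tp n x f, tp n y g⟫_ℂ = ⟪x, y⟫_ℂ * ⟪f, g⟫_ℂ) →
      (∀ n (f : H), IsLinearMap ℂ (fun x : Hn n => tp n x f)) →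
      (∀ n (x : Hn n), IsLinearMap ℂ (tp n x)) →
      (∀ n, (Submodule.span ℂ
        (Set.range fun p : Hn n × H => tp n p.1 p.2)).topologicalClosure = ⊤) →
    ∀ (ptr : ∀ m n : ℕ, (Hn m →L[ℂ] Hn m) → (Hn n →L[ℂ] Hn n)),
      (∀ m n, IsLinearMap ℂ (ptr m n)) →
      (∀ n G, ptr n n G = G) →
      (∀ n (G : Hn (n + 1) →L[ℂ] Hn (n + 1)) (x y : Hn n)
        (ι : Type u) (e : HilbertBasis ι ℂ H),
        HasSum (fun i => ⟪tp n x (e i), G (tp n y (e i))⟫_ℂ) ⟪x, ptr (n + 1) n G y⟫_ℂ) →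
      (∀ m n : ℕ, n ≤ m → ∀ (G : Hn (m + 1) →L[ℂ] Hn (m + 1)),
        ptr (m + 1) n G = ptr m n (ptr (m + 1) m G)) →
    ∀ (γ : ℕ → (Hn N →L[ℂ] Hn N)) (ε : ℝ)
      (Ginf : ∀ n, Hn n →L[ℂ] Hn n),
      (∀ k, TraceNormLE (γ k) ε) →
      (∀ n, N < n → Ginf n = 0) →
      -- geometric convergence: the reduced density matrices
      -- `γ_k^{(n)} = C(N,n) Tr_{n+1,…,N} γ_k` converge weakly-* to those of `Ginf`
      (∀ n, n ≤ N → WeakStarTo (fun k => (N.choose n : ℂ) • ptr N n (γ k))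
        (rdm ptr N Ginf n)) →
      ∃ C : ℕ → ℝ, (∀ n, TraceNormLE (Ginf n) (C n)) ∧
        ∑ n ∈ Finset.range (N + 1), C n ≤ c * ε := by
  refine ⟨3 ^ N, by positivity, ?_⟩
  intro H _ _ _ Hn _ _ _ tp htp _ _ _ ptr hlin hrefl hps hcomp γ ε Ginf hγ h0 hconv
  have hrdm : ∀ m ≤ N, TraceNormLE (rdm ptr N Ginf m) (N.choose m * ε) := fun m hm =>
    (hconv m hm).traceNormLE fun k => by
      simpa using ((hγ k).partialTrace htp hrefl hps hcomp hm).smul (N.choose m : ℂ)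
  refine ⟨fun n => ∑ m ∈ Icc n N, m.choose n * (N.choose m * ε), fun n => ?_, ?_⟩
  · rcases le_or_gt n N with hn | hn
    · exact traceNormLE_of_rdm htp hlin hrefl hps hcomp Ginf hn fun m hm =>
        hrdm m (mem_Icc.1 hm).2
    · simpa [h0 n hn, Icc_eq_empty_of_lt hn] using traceNormLE_zero
  · have h3 := congrArg (Nat.cast : ℕ → ℝ) (sum_range_sum_Icc_choose_mul_choose N)
    push_cast at h3
    simp only [← mul_assoc, ← sum_mul, h3, le_refl]
end
end

section
/- A state Γ = G_0 ⊕ ⋯ ⊕ G_N on the truncated Fock space 𝓕^{≤N}(𝓗) is uniquely determined by its family of reduced density matrices Γ^{(n)}, 0 ≤ n ≤ N; explicitly, G_n = Γ^{(n)} + Σ_{j=1}^{N−n} (−1)^j C(n+j, n) Tr_{n+1,…,n+j} Γ^{(n+j)}. -/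
open scoped InnerProductSpace
open Filter

noncomputable section

universe u

section Defs

variable {E : Type u} [NormedAddCommGroup E] [InnerProductSpace ℂ E] [CompleteSpace E]

/-- `A` is trace class. -/
def IsTrCl (A : E →L[ℂ] E) : Prop := ∃ C : ℝ, TraceNormLE A C

end Defs

/-!
Writing `Γ^{(k)} = ∑_{m ≥ k} C(m,k) Tr_{m→k} G_m` and using `Tr_{k→n} ∘ Tr_{m→k} = Tr_{m→n}`,
the alternating sum `∑_j (-1)^j C(n+j,n) Tr_{n+j→n} Γ^{(n+j)}` becomes a combination of the
`Tr_{m→n} G_m` in which `G_m` carries the coefficient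
`∑_j (-1)^j C(n+j,n) C(m,n+j) = C(m,n) ∑_j (-1)^j C(m-n,j)`, which vanishes unless `m = n`.
-/

open Finset

theorem sum_range_neg_one_pow_mul_choose_mul_choose (n m : ℕ) :
    ∑ j ∈ range (m - n + 1), (-1 : ℤ) ^ j * (n + j).choose n * m.choose (n + j) =
      if m = n then 1 else 0 := by
  have hchoose : ∀ j, (n + j).choose n * m.choose (n + j) = m.choose n * (m - n).choose j :=
    fun j => by rw [mul_comm, Nat.choose_mul (Nat.le_add_right n j), Nat.add_sub_cancel_left]
  simp_rw [mul_assoc, ← Nat.cast_mul, hchoose, Nat.cast_mul, mul_left_comm _ (m.choose n : ℤ),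
    ← mul_sum, Int.alternating_sum_range_choose]
  rcases lt_trichotomy m n with h | rfl | h
  · simp [Nat.choose_eq_zero_of_lt h, h.ne]
  · simp
  · simp [h.ne', Nat.sub_ne_zero_of_lt h]

theorem Finset.sum_range_succ_eq_add_sum_Icc {M : Type*} [AddCommMonoid M] (f : ℕ → M) (k : ℕ) :
    ∑ j ∈ range (k + 1), f j = f 0 + ∑ j ∈ Icc 1 k, f j := by
  rw [sum_range_succ', add_comm, ← Ico_add_one_right_eq_Icc, sum_Ico_eq_sum_range]
  simp [add_comm]

section PartialTrace

variable {R : Type*} {V : ℕ → Type*} (ptr : ∀ m n, V m → V n)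

theorem partialTrace_comp_of_le (hid : ∀ n A, ptr n n A = A)
    (hstep : ∀ m n, n ≤ m → ∀ A, ptr (m + 1) n A = ptr m n (ptr (m + 1) m A))
    {n k m : ℕ} (hnk : n ≤ k) (hkm : k ≤ m) (A : V m) : ptr k n (ptr m k A) = ptr m n A := by
  induction m, hkm using Nat.le_induction with
  | base => rw [hid]
  | succ m hkm ih => rw [hstep m k hkm, ih, ← hstep m n (hnk.trans hkm)]

variable [Ring R] [∀ n, AddCommGroup (V n)] [∀ n, Module R (V n)]

variable (R) in

/-- `rdm` for an arbitrary family of modules; `rdm ptr N G = reducedSum ℂ ptr N G` by `rfl`. -/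
def reducedSum (N : ℕ) (G : ∀ n, V n) (n : ℕ) : V n :=
  ∑ m ∈ Icc n N, (m.choose n : R) • ptr m n (G m)

theorem sum_range_alternating_reducedSum (hlin : ∀ m n, IsLinearMap R (ptr m n))
    (hid : ∀ n A, ptr n n A = A)
    (hstep : ∀ m n, n ≤ m → ∀ A, ptr (m + 1) n A = ptr m n (ptr (m + 1) m A))
    (G : ∀ n, V n) {n N : ℕ} (hn : n ≤ N) :
    ∑ j ∈ range (N - n + 1), ((-1 : R) ^ j * (n + j).choose n) •
      ptr (n + j) n (reducedSum R ptr N G (n + j)) = G n := by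
  have expand : ∀ j, ((-1 : R) ^ j * (n + j).choose n) •
      ptr (n + j) n (reducedSum R ptr N G (n + j)) =
      ∑ m ∈ Icc (n + j) N, ((-1 : R) ^ j * (n + j).choose n * m.choose (n + j)) •
        ptr m n (G m) := by
    intro j
    let L := (hlin (n + j) n).mk'
    rw [reducedSum, show ptr (n + j) n = L from rfl, map_sum, smul_sum]
    refine sum_congr rfl fun m hm => ?_
    rw [map_smul, IsLinearMap.mk'_apply, smul_smul, mul_assoc,
      partialTrace_comp_of_le ptr hid hstep (Nat.le_add_right n j) (mem_Icc.1 hm).1]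
  calc _ = ∑ j ∈ range (N - n + 1), ∑ m ∈ Icc (n + j) N,
        ((-1 : R) ^ j * (n + j).choose n * m.choose (n + j)) • ptr m n (G m) :=
        sum_congr rfl fun j _ => expand j
    _ = ∑ m ∈ Icc n N, ∑ j ∈ range (m - n + 1),
        ((-1 : R) ^ j * (n + j).choose n * m.choose (n + j)) • ptr m n (G m) := by
        refine sum_comm' fun j m => ?_
        simp only [mem_range, mem_Icc]
        omega
    _ = ∑ m ∈ Icc n N, (if m = n then ptr m n (G m) else 0) := by
        refine sum_congr rfl fun m _ => ?_
        have coeff := congrArg (Int.cast : ℤ → R) (sum_range_neg_one_pow_mul_choose_mul_choose n m)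
        push_cast at coeff
        rw [← sum_smul, coeff, ite_smul, one_smul, zero_smul]
    _ = G n := by rw [sum_ite_eq', if_pos (mem_Icc.2 ⟨le_rfl, hn⟩), hid]

theorem eq_reducedSum_add_sum_Icc_alternating (hlin : ∀ m n, IsLinearMap R (ptr m n))
    (hid : ∀ n A, ptr n n A = A)
    (hstep : ∀ m n, n ≤ m → ∀ A, ptr (m + 1) n A = ptr m n (ptr (m + 1) m A))
    (G : ∀ n, V n) {n N : ℕ} (hn : n ≤ N) :
    G n = reducedSum R ptr N G n + ∑ j ∈ Icc 1 (N - n), ((-1 : R) ^ j * (n + j).choose n) •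
      ptr (n + j) n (reducedSum R ptr N G (n + j)) := by
  conv_lhs => rw [← sum_range_alternating_reducedSum ptr hlin hid hstep G hn,
    sum_range_succ_eq_add_sum_Icc]
  simp only [pow_zero, add_zero, Nat.choose_self, Nat.cast_one, one_mul, one_smul]
  exact congrArg (· + _) (hid n _)

theorem eq_of_reducedSum_eq (hlin : ∀ m n, IsLinearMap R (ptr m n))
    (hid : ∀ n A, ptr n n A = A)
    (hstep : ∀ m n, n ≤ m → ∀ A, ptr (m + 1) n A = ptr m n (ptr (m + 1) m A))
    {N : ℕ} {G G' : ∀ n, V n} (h : ∀ n, n ≤ N → reducedSum R ptr N G n = reducedSum R ptr N G' n)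
    {n : ℕ} (hn : n ≤ N) : G n = G' n := by
  rw [eq_reducedSum_add_sum_Icc_alternating ptr hlin hid hstep G hn,
    eq_reducedSum_add_sum_Icc_alternating ptr hlin hid hstep G' hn, h n hn]
  refine congrArg _ (sum_congr rfl fun j hj => ?_)
  rw [h (n + j) (by grind)]

end PartialTrace

theorem state_determined_by_reduced_density_matrices_general
    {Hn : ℕ → Type u} [∀ n, NormedAddCommGroup (Hn n)]
    [∀ n, InnerProductSpace ℂ (Hn n)] [∀ n, CompleteSpace (Hn n)]
    (ptr : ∀ m n : ℕ, (Hn m →L[ℂ] Hn m) → (Hn n →L[ℂ] Hn n))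
    (hptr_lin : ∀ m n, IsLinearMap ℂ (ptr m n))
    (hptr_id : ∀ n G, ptr n n G = G)
    (hptr_comp : ∀ m n : ℕ, n ≤ m → ∀ (G : Hn (m + 1) →L[ℂ] Hn (m + 1)),
      ptr (m + 1) n G = ptr m n (ptr (m + 1) m G))
    (N : ℕ)
    (G : ∀ n, Hn n →L[ℂ] Hn n)
    (hGsupp : ∀ n, N < n → G n = 0) :
    -- explicit inversion formula
    (∀ n, n ≤ N → G n = rdm ptr N G n +
      ∑ j ∈ Finset.Icc 1 (N - n), (((-1 : ℂ) ^ j) * ((n + j).choose n : ℂ)) •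
        ptr (n + j) n (rdm ptr N G (n + j))) ∧
    -- uniqueness: any trace-class block operator with the same reduced density
    -- matrices coincides with `G`
    (∀ G' : ∀ n, Hn n →L[ℂ] Hn n, (∀ n, IsTrCl (G' n)) → (∀ n, N < n → G' n = 0) →
      (∀ n, n ≤ N → rdm ptr N G n = rdm ptr N G' n) → ∀ n, G n = G' n) := by
  refine ⟨fun n hn => eq_reducedSum_add_sum_Icc_alternating ptr hptr_lin hptr_id hptr_comp G hn,
    fun G' _ hG'supp hrdm n => ?_⟩
  rcases le_or_gt n N with hn | hn
  · exact eq_of_reducedSum_eq ptr hptr_lin hptr_id hptr_comp hrdm hn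
  · rw [hGsupp n hn, hG'supp n hn]

/-- **Reconstruction of a truncated Fock space state from its reduced density
matrices.** A trace-class block operator `Γ = G_0 ⊕ ⋯ ⊕ G_N` on `𝓕^{≤N}(𝓗)` is uniquely
determined by its reduced density matrices `Γ^{(n)}`, with the explicit inversion formula
`G_n = Γ^{(n)} + ∑_{j=1}^{N−n} (−1)^j C(n+j,n) Tr_{n+1,…,n+j} Γ^{(n+j)}`. -/
theorem state_determined_by_reduced_density_matrices
    {H : Type u} [NormedAddCommGroup H] [InnerProductSpace ℂ H] [CompleteSpace H]
    {Hn : ℕ → Type u} [∀ n, NormedAddCommGroup (Hn n)]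
    [∀ n, InnerProductSpace ℂ (Hn n)] [∀ n, CompleteSpace (Hn n)]
    (tp : ∀ n, Hn n → H → Hn (n + 1))
    (htp_inner : ∀ n (x y : Hn n) (f g : H),
      ⟪tp n x f, tp n y g⟫_ℂ = ⟪x, y⟫_ℂ * ⟪f, g⟫_ℂ)
    (htp_linL : ∀ n (f : H), IsLinearMap ℂ (fun x : Hn n => tp n x f))
    (htp_linR : ∀ n (x : Hn n), IsLinearMap ℂ (tp n x))
    (htp_dense : ∀ n, (Submodule.span ℂ
      (Set.range fun p : Hn n × H => tp n p.1 p.2)).topologicalClosure = ⊤)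
    (ptr : ∀ m n : ℕ, (Hn m →L[ℂ] Hn m) → (Hn n →L[ℂ] Hn n))
    (hptr_lin : ∀ m n, IsLinearMap ℂ (ptr m n))
    (hptr_id : ∀ n G, ptr n n G = G)
    (hptr_step : ∀ n (G : Hn (n + 1) →L[ℂ] Hn (n + 1)) (x y : Hn n)
      (ι : Type u) (e : HilbertBasis ι ℂ H),
      HasSum (fun i => ⟪tp n x (e i), G (tp n y (e i))⟫_ℂ) ⟪x, ptr (n + 1) n G y⟫_ℂ)
    (hptr_comp : ∀ m n : ℕ, n ≤ m → ∀ (G : Hn (m + 1) →L[ℂ] Hn (m + 1)),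
      ptr (m + 1) n G = ptr m n (ptr (m + 1) m G))
    (N : ℕ)
    (G : ∀ n, Hn n →L[ℂ] Hn n)
    (hGtc : ∀ n, IsTrCl (G n))
    (hGsupp : ∀ n, N < n → G n = 0) :
    -- explicit inversion formula
    (∀ n, n ≤ N → G n = rdm ptr N G n +
      ∑ j ∈ Finset.Icc 1 (N - n), (((-1 : ℂ) ^ j) * ((n + j).choose n : ℂ)) •
        ptr (n + j) n (rdm ptr N G (n + j))) ∧
    -- uniqueness: any trace-class block operator with the same reduced density
    -- matrices coincides with `G`
    (∀ G' : ∀ n, Hn n →L[ℂ] Hn n, (∀ n, IsTrCl (G' n)) → (∀ n, N < n → G' n = 0) →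
      (∀ n, n ≤ N → rdm ptr N G n = rdm ptr N G' n) → ∀ n, G n = G' n) :=
  state_determined_by_reduced_density_matrices_general ptr hptr_lin hptr_id hptr_comp N G hGsupp
end
end

section
/- Let A and B be Hilbert–Schmidt operators on L²(ℝ^d) and L²(V) respectively, where V = {(x₁,x₂) ∈ ℝ^{2d} : x₁ + x₂ = 0} is parametrized by v = x₁ − x₂. Then the operator C = (A ⊗ 1)(B ⊗_V 1) on L²(ℝ^{2d}), acting as (Cψ)(x₁,x₂) = ∫ a(x₁,x') b(x'−x₂, x'−y') ψ(x',y') dx'dy', is Hilbert–Schmidt, where a, b are the integral kernels of A, B. -/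
/-!
The kernel is the product kernel `(p₁, p₂) ↦ a p₁ * b p₂` pulled back along the change of
variables `((x₁,x₂),(x',y')) ↦ ((x₁,x'),(x'−x₂,x'−y'))`. That map preserves Lebesgue measure:
it is a shuffle of coordinates followed, fibrewise over `(x₁,x')`, by the reflection-translation
`v ↦ x' − v` in each remaining variable. By Fubini the product kernel is square integrable.
-/

open MeasureTheory

section Shuffle

variable {α β γ δ : Type*} [MeasurableSpace α] [MeasurableSpace β] [MeasurableSpace γ]
  [MeasurableSpace δ] {μa : Measure α} {μb : Measure β} {μc : Measure γ} {μd : Measure δ}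

theorem measurePreserving_prodProdProdComm [SFinite μa] [SFinite μb] [SFinite μc] [SFinite μd] :
    MeasurePreserving (fun q : (α × β) × (γ × δ) => ((q.1.1, q.2.1), (q.1.2, q.2.2)))
      ((μa.prod μb).prod (μc.prod μd)) ((μa.prod μc).prod (μb.prod μd)) := by
  have hmid : MeasurePreserving (fun p : β × (γ × δ) => (p.2.1, (p.1, p.2.2)))
      (μb.prod (μc.prod μd)) (μc.prod (μb.prod μd)) :=
    ((measurePreserving_prodAssoc μc μb μd).comp
      ((Measure.measurePreserving_swap (μ := μb) (ν := μc)).prod (MeasurePreserving.id μd))).comp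
      (measurePreserving_prodAssoc μb μc μd).symm
  exact ((measurePreserving_prodAssoc μa μc (μb.prod μd)).symm.comp
    ((MeasurePreserving.id μa).prod hmid)).comp (measurePreserving_prodAssoc μa μb (μc.prod μd))

end Shuffle

section SubLeft

variable {G : Type*} [MeasurableSpace G] [AddGroup G] [MeasurableAdd G] [MeasurableNeg G]
  [MeasurableSub₂ G] (μ : Measure G) [SFinite μ] [μ.IsAddLeftInvariant] [μ.IsNegInvariant]

theorem measurePreserving_skew_sub_left :
    MeasurePreserving (fun q : (G × G) × (G × G) => (q.1, (q.1.2 - q.2.1, q.1.2 - q.2.2)))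
      ((μ.prod μ).prod (μ.prod μ)) ((μ.prod μ).prod (μ.prod μ)) :=
  (MeasurePreserving.id (μ.prod μ)).skew_product
    (g := fun p (c : G × G) => (p.2 - c.1, p.2 - c.2)) (by fun_prop) <| ae_of_all _ fun p =>
    ((Measure.measurePreserving_sub_left μ p.2).prod
      (Measure.measurePreserving_sub_left μ p.2)).map_eq

theorem measurePreserving_prodProdProdComm_skew_sub_left :
    MeasurePreserving
      (fun q : (G × G) × (G × G) => ((q.1.1, q.2.1), (q.2.1 - q.1.2, q.2.1 - q.2.2)))
      ((μ.prod μ).prod (μ.prod μ)) ((μ.prod μ).prod (μ.prod μ)) :=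
  (measurePreserving_skew_sub_left μ).comp measurePreserving_prodProdProdComm

end SubLeft

section ProductKernel

variable {α β L : Type*} [MeasurableSpace α] [MeasurableSpace β] {μ : Measure α} {ν : Measure β}
  [NormedRing L] [NormMulClass L] {f : α → L} {g : β → L} {p : ENNReal}

theorem MeasureTheory.MemLp.mul_prod (hp₀ : p ≠ 0) (hp : p ≠ ⊤) (hf : MemLp f p μ)
    (hg : MemLp g p ν) : MemLp (fun z : α × β => f z.1 * g z.2) p (μ.prod ν) := by
  refine (integrable_norm_rpow_iff (hf.1.comp_fst.mul hg.1.comp_snd) hp₀ hp).1 ?_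
  simpa only [Pi.mul_apply, norm_mul, Real.mul_rpow (norm_nonneg _) (norm_nonneg _)] using
    ((integrable_norm_rpow_iff hf.1 hp₀ hp).2 hf).mul_prod
      ((integrable_norm_rpow_iff hg.1 hp₀ hp).2 hg)

end ProductKernel

/-- **Hilbert–Schmidt property of `(A ⊗ 1)(B ⊗_V 1)`.**  Let `A` and `B` be
Hilbert–Schmidt operators on `L²(ℝ^d)` and `L²(V)` (with `V = {x₁ + x₂ = 0} ≅ ℝ^d`
parametrized by `v = x₁ − x₂`), given by square-integrable kernels `a(x, x')` and
`b(v, v')`.  Then the operator `C = (A ⊗ 1)(B ⊗_V 1)` on `L²(ℝ^{2d})`, which acts as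
`(Cψ)(x₁,x₂) = ∫ a(x₁,x') b(x'−x₂, x'−y') ψ(x',y') dx' dy'`, is an integral operator
with kernel in `L²(ℝ^{4d})`, hence Hilbert–Schmidt. -/
theorem hilbertSchmidt_comp_kernel (d : ℕ)
    (a b : ((Fin d → ℝ) × (Fin d → ℝ)) → ℂ)
    (ha : MemLp a 2 (volume : Measure ((Fin d → ℝ) × (Fin d → ℝ))))
    (hb : MemLp b 2 (volume : Measure ((Fin d → ℝ) × (Fin d → ℝ)))) :
    MemLp (fun q : ((Fin d → ℝ) × (Fin d → ℝ)) × ((Fin d → ℝ) × (Fin d → ℝ)) =>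
        a (q.1.1, q.2.1) * b (q.2.1 - q.1.2, q.2.1 - q.2.2)) 2
      (volume : Measure (((Fin d → ℝ) × (Fin d → ℝ)) × ((Fin d → ℝ) × (Fin d → ℝ)))) :=
  (ha.mul_prod two_ne_zero ENNReal.ofNat_ne_top hb).comp_measurePreserving
    (measurePreserving_prodProdProdComm_skew_sub_left volume)
end
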